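/- arXiv:1012.4081 — 4 statements merged into one kernel-verified Lean document; each statement's English description precedes it below -/
import Mathlib

section
/- Let R be a commutative ring, M an R-module, and (M_i)_{i ∈ ℤ} an increasing family of R-submodules of M which is exhaustive, i.e. ⋃_{i ∈ ℤ} M_i = M. Suppose there exists i₀ ∈ ℤ with M_{i₀} = 0 and that for every i > i₀ the quotient module M_i / M_{i-1} is a flat R-module. Then M is a flat R-module. -/
/-!
Flatness can be tested on ideals: `P` is flat once every `P ⊗ I → P ⊗ R` is injective. This test
passes to an extension `0 → N → P → Q → 0` of flat modules by a chase through the tensored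
sequences, which needs only right exactness of `⊗` and the injectivity of `N ⊗ I → P ⊗ R`. It
also passes to a directed union, since every tensor in `M ⊗ I` already lives in some `F i ⊗ I`.
As the filtration starts at `0`, induction on `i` makes every `F i` flat, and `M` is their
directed union.
-/

open LinearMap TensorProduct

namespace Module.Flat

variable {R : Type*} [CommRing R]

theorem lTensor_comp_rTensor_injective {N P A B : Type*} [AddCommGroup N] [Module R N]
    [AddCommGroup P] [Module R P] [AddCommGroup A] [Module R A] [AddCommGroup B] [Module R B]
    [Flat R N] [Flat R B] {f : N →ₗ[R] P} {g : A →ₗ[R] B} (hf : Function.Injective f)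
    (hg : Function.Injective g) : Function.Injective (lTensor P g ∘ₗ rTensor A f) := by
  rw [lTensor_comp_rTensor]
  exact map_injective_of_flat_flat' f g hf hg

theorem of_exact {N P Q : Type*} [AddCommGroup N] [Module R N] [AddCommGroup P] [Module R P]
    [AddCommGroup Q] [Module R Q] [Flat R N] [Flat R Q] {f : N →ₗ[R] P} {g : P →ₗ[R] Q}
    (hf : Function.Injective f) (hfg : Function.Exact f g) (hg : Function.Surjective g) :
    Flat R P := by
  refine iff_lTensor_injective'.mpr fun I ↦ (injective_iff_map_eq_zero _).mpr fun x hx ↦ ?_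
  have hgx : rTensor I g x = 0 := by
    apply lTensor_preserves_injective_linearMap (M := Q) I.subtype I.injective_subtype
    rw [map_zero, ← comp_apply, lTensor_comp_rTensor, ← rTensor_comp_lTensor, comp_apply, hx,
      map_zero]
  obtain ⟨y, rfl⟩ := (_root_.rTensor_exact I hfg hg x).mp hgx
  rw [(injective_iff_map_eq_zero _).mp
    (lTensor_comp_rTensor_injective hf I.injective_subtype) y hx, map_zero]

theorem of_submodule_of_quotient {M : Type*} [AddCommGroup M] [Module R M] (N : Submodule R M)
    [Flat R N] [Flat R (M ⧸ N)] : Flat R M :=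
  of_exact N.injective_subtype (LinearMap.exact_subtype_mkQ N) N.mkQ_surjective

theorem _root_.TensorProduct.exists_rTensor_subtype_eq_of_directed {M N ι : Type*}
    [AddCommGroup M] [Module R M] [AddCommGroup N] [Module R N] [Nonempty ι]
    {F : ι → Submodule R M} (hdir : Directed (· ≤ ·) F) (htop : ⨆ i, F i = ⊤) (x : M ⊗[R] N) :
    ∃ (i : ι) (t : F i ⊗[R] N), rTensor N (F i).subtype t = x := by
  induction x with
  | zero => exact ⟨Classical.arbitrary ι, 0, map_zero _⟩
  | tmul m n =>
    have hm : m ∈ ⨆ i, F i := htop ▸ Submodule.mem_top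
    obtain ⟨i, hi⟩ := (Submodule.mem_iSup_of_directed F hdir).mp hm
    exact ⟨i, ⟨m, hi⟩ ⊗ₜ n, rfl⟩
  | add y z hy hz =>
    obtain ⟨i, s, rfl⟩ := hy
    obtain ⟨j, t, rfl⟩ := hz
    obtain ⟨k, hik, hjk⟩ := hdir i j
    refine ⟨k, rTensor N (Submodule.inclusion hik) s + rTensor N (Submodule.inclusion hjk) t, ?_⟩
    rw [map_add, ← rTensor_comp_apply, ← rTensor_comp_apply, Submodule.subtype_comp_inclusion,
      Submodule.subtype_comp_inclusion]

theorem of_directed_iSup_eq_top {M ι : Type*} [AddCommGroup M] [Module R M] [Nonempty ι]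
    {F : ι → Submodule R M} (hdir : Directed (· ≤ ·) F) (htop : ⨆ i, F i = ⊤)
    (hF : ∀ i, Flat R (F i)) : Flat R M := by
  refine iff_lTensor_injective'.mpr fun I ↦ (injective_iff_map_eq_zero _).mpr fun x hx ↦ ?_
  obtain ⟨i, t, rfl⟩ := exists_rTensor_subtype_eq_of_directed hdir htop x
  rw [(injective_iff_map_eq_zero _).mp
    (lTensor_comp_rTensor_injective (F i).injective_subtype I.injective_subtype) t hx, map_zero]

end Module.Flat

/-- Let `R` be a commutative ring, `M` an `R`-module, and `(Mᵢ)_{i ∈ ℤ}` an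
increasing exhaustive family of submodules of `M` (`⋃ i, Mᵢ = M`).  If there is some `i₀` with
`M_{i₀} = 0` and the quotient `Mᵢ / M_{i-1}` is flat for every `i > i₀`, then `M` is flat. -/
theorem flat_of_exhaustive_filtration_flat_quotients
    {R : Type*} [CommRing R] {M : Type*} [AddCommGroup M] [Module R M]
    (F : ℤ → Submodule R M) (hmono : Monotone F) (hexh : (⨆ i : ℤ, F i) = ⊤)
    (i₀ : ℤ) (hbot : F i₀ = ⊥)
    (hflat : ∀ i : ℤ, i₀ < i →
      Module.Flat R ((F i) ⧸ ((F (i - 1)).comap (F i).subtype))) :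
    Module.Flat R M := by
  have hflat_ge : ∀ i, i₀ ≤ i → Module.Flat R (F i) := by
    refine Int.leInduction (hbot ▸ inferInstance) fun i hi ih ↦ ?_
    have hquot := hflat (i + 1) (by omega)
    rw [add_sub_cancel_right] at hquot
    have hsub : Module.Flat R ((F i).comap (F (i + 1)).subtype) :=
      .of_linearEquiv (Submodule.comapSubtypeEquivOfLe (hmono (Int.le_add_one le_rfl)))
    exact .of_submodule_of_quotient ((F i).comap (F (i + 1)).subtype)
  refine .of_directed_iSup_eq_top hmono.directed_le hexh fun i ↦ ?_
  rcases le_total i₀ i with hi | hi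
  · exact hflat_ge i hi
  · have hFi : F i = ⊥ := le_bot_iff.mp (hbot ▸ hmono hi)
    exact hFi ▸ inferInstance
end

section
/- Let R be a commutative ring, M an R-module, and (M_i)_{i ∈ ℤ} an increasing exhaustive family of R-submodules of M (⋃_{i∈ℤ} M_i = M). Suppose there exists i₀ ∈ ℤ with M_{i₀} = 0 and that for every i ∈ ℤ the quotient module M_i / M_{i-1} is a free R-module. Then M is a free R-module. -/
/-!
Lift a basis of each quotient `Fᵢ / Fᵢ₋₁` to `Fᵢ`. By induction upwards from `i₀`, the lifts with
index at most `i` form a basis of `Fᵢ`, since a basis of a submodule together with lifts of a basis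
of the quotient is a basis of the whole. Linear independence survives the increasing union, and
exhaustiveness makes the union span `M`.
-/

section

open Set Submodule

variable {R M : Type*} [Ring R] [Nontrivial R] [AddCommGroup M] [Module R M]

/-- Take for `t` lifts to `P` of a basis of `P / N`. -/
theorem Submodule.exists_linearIndepOn_mkQ_sup_span_eq {N P : Submodule R M} (hNP : N ≤ P)
    [Module.Free R (P ⧸ N.comap P.subtype)] :
    ∃ t ⊆ (P : Set M), LinearIndepOn R N.mkQ t ∧ N ⊔ span R t = P := by
  let N' := N.comap P.subtype
  let b := Module.Free.chooseBasis R (P ⧸ N')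
  choose v hv using fun i => N'.mkQ_surjective (b i)
  have hmkQv : N'.mkQ ∘ v = b := funext hv
  have hker : LinearMap.ker (N'.mapQ N P.subtype le_rfl) = ⊥ := by
    rw [ker_mapQ, mkQ_map_self]
  have hli : LinearIndependent R (N.mkQ ∘ P.subtype ∘ v) := by
    have : N.mkQ ∘ P.subtype ∘ v = N'.mapQ N P.subtype le_rfl ∘ b := by
      rw [← hmkQv]
      rfl
    exact this ▸ b.linearIndependent.map' _ hker
  have hspan : N' ⊔ span R (range v) = ⊤ := by
    rw [← map_mkQ_eq_top, map_span, ← range_comp, hmkQv, b.span_eq]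
  refine ⟨range (P.subtype ∘ v), range_subset_iff.2 fun i => (v i).2,
    (linearIndepOn_range_iff hli.injective.of_comp _).2 hli, ?_⟩
  apply_fun map P.subtype at hspan
  rwa [map_sup, map_comap_subtype, inf_eq_right.2 hNP, map_span, ← range_comp,
    map_subtype_top] at hspan

theorem Module.Free.of_iSup_eq_top_of_free_quotients (G : ℕ → Submodule R M) (hmono : Monotone G)
    (hbot : G 0 = ⊥) (hexh : ⨆ n, G n = ⊤)
    (hfree : ∀ n, Module.Free R (G (n + 1) ⧸ (G n).comap (G (n + 1)).subtype)) :
    Module.Free R M := by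
  choose t _ hli hspan using fun n =>
    have := hfree n
    exists_linearIndepOn_mkQ_sup_span_eq (hmono n.le_succ)
  let s n := ⋃ k < n, t k
  have hs : ∀ n, LinearIndepOn R id (s n) ∧ span R (s n) = G n := by
    intro n
    induction n with
    | zero => simp [s, hbot]
    | succ n ih =>
      simp only [s, biUnion_lt_succ]
      refine ⟨ih.1.union_id_of_quotient (ih.2 ▸ subset_span) (hli n), ?_⟩
      rw [span_union, ih.2, hspan n]
  have hsmono : Monotone s := fun m n hmn =>
    iUnion₂_subset fun k hk => subset_iUnion₂_of_subset k (hk.trans_le hmn) le_rfl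
  have hunion : LinearIndepOn R id (⋃ n, s n) :=
    linearIndepOn_iUnion_of_directed hsmono.directed_le fun n => (hs n).1
  refine Module.Free.of_basis (Module.Basis.mk hunion ?_)
  simp only [id_eq, Subtype.range_coe]
  rw [span_iUnion, ← hexh]
  exact (iSup_congr fun n => (hs n).2).ge

end

/-- Let `R` be a commutative ring, `M` an `R`-module, and `(Mᵢ)_{i ∈ ℤ}` an
increasing exhaustive family of submodules of `M` (`⋃ i, Mᵢ = M`).  If there is some `i₀` with
`M_{i₀} = 0` and the quotient `Mᵢ / M_{i-1}` is a free `R`-module for every `i`, then `M` is a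
free `R`-module. -/
theorem free_of_exhaustive_filtration_free_quotients
    {R : Type*} [CommRing R] {M : Type*} [AddCommGroup M] [Module R M]
    (F : ℤ → Submodule R M) (hmono : Monotone F) (hexh : (⨆ i : ℤ, F i) = ⊤)
    (i₀ : ℤ) (hbot : F i₀ = ⊥)
    (hfree : ∀ i : ℤ,
      Module.Free R ((F i) ⧸ ((F (i - 1)).comap (F i).subtype))) :
    Module.Free R M := by
  rcases subsingleton_or_nontrivial R with _ | _
  · exact Module.Free.of_subsingleton' R M
  refine Module.Free.of_iSup_eq_top_of_free_quotients (fun n => F (i₀ + n))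
    (fun m n hmn => hmono (by omega)) (by simpa using hbot) ?_ fun n => ?_
  · refine eq_top_iff.2 (hexh ▸ iSup_le fun i => ?_)
    exact le_iSup_of_le (i - i₀).toNat (hmono (by omega))
  · have := hfree (i₀ + (n + 1 : ℕ))
    rwa [show i₀ + ((n + 1 : ℕ) : ℤ) - 1 = i₀ + n by omega] at this
end

section
/- Let R be a commutative Noetherian ring and M a nonzero finitely generated R-module. Define the dimension of a nonzero finitely generated R-module N to be the Krull dimension of R/Ann_R(N), the quotient of R by the annihilator of N (equivalently, the dimension of the support of N). Then the following are equivalent: (i) M is pure, i.e. every nonzero submodule N of M satisfies dim N = dim M; (ii) every associated prime ideal p of M satisfies krullDim(R/p) = dim M. -/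
/-! An associated prime `p = Ann(x)` of `M` is the annihilator of the nonzero submodule `R ∙ x`,
so `dim R/p` is the dimension of a nonzero submodule; this gives (i) ⇒ (ii). Conversely, dimension
can only drop on passing to a submodule `N`, while an associated prime `p` of `N` (which exists
since `N ≠ 0`) is an associated prime of `M` containing `Ann N`, so `dim M = dim R/p ≤ dim N`. -/

/-- The dimension of a module: the Krull dimension of the quotient of the base ring by the
annihilator of the module (the dimension of the support). -/
noncomputable def moduleDim (R : Type*) [CommRing R] (N : Type*) [AddCommGroup N]
    [Module R N] : WithBot (WithTop ℕ) :=
  ringKrullDim (R ⧸ Module.annihilator R N)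

open Submodule

section moduleDim

variable {R : Type*} [CommRing R]

theorem ringKrullDim_quotient_le_of_le {I J : Ideal R} (h : I ≤ J) :
    ringKrullDim (R ⧸ J) ≤ ringKrullDim (R ⧸ I) :=
  ringKrullDim_le_of_surjective _ (Ideal.Quotient.factor_surjective h)

theorem moduleDim_le_of_injective {N M : Type*} [AddCommGroup N] [Module R N] [AddCommGroup M]
    [Module R M] {f : N →ₗ[R] M} (hf : Function.Injective f) :
    moduleDim R N ≤ moduleDim R M :=
  ringKrullDim_quotient_le_of_le (LinearMap.annihilator_le_of_injective f hf)

variable {M : Type*} [AddCommGroup M] [Module R M] {p : Ideal R}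

theorem IsAssociatedPrime.ringKrullDim_quotient_le_moduleDim (hp : IsAssociatedPrime p M) :
    ringKrullDim (R ⧸ p) ≤ moduleDim R M :=
  ringKrullDim_quotient_le_of_le (annihilator_top (R := R) (M := M) ▸ hp.annihilator_le)

theorem IsAssociatedPrime.exists_ne_zero_moduleDim_span_singleton_eq [IsNoetherianRing R]
    (hp : IsAssociatedPrime p M) :
    ∃ x : M, x ≠ 0 ∧ moduleDim R (R ∙ x) = ringKrullDim (R ⧸ p) := by
  obtain ⟨hprime, x, rfl⟩ := isAssociatedPrime_iff.mp hp
  rw [bot_colon'] at hprime ⊢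
  refine ⟨x, fun hx => hprime.ne_top ?_, rfl⟩
  rw [annihilator_eq_top_iff, hx, span_singleton_eq_bot.mpr rfl]

end moduleDim

theorem pure_iff_associatedPrimes_dim_eq_general
    {R : Type*} [CommRing R] [IsNoetherianRing R]
    {M : Type*} [AddCommGroup M] [Module R M] :
    (∀ N : Submodule R M, N ≠ ⊥ → moduleDim R N = moduleDim R M) ↔
      (∀ p ∈ associatedPrimes R M, ringKrullDim (R ⧸ p) = moduleDim R M) := by
  refine ⟨fun hpure p hp => ?_, fun hassoc N hN => ?_⟩
  · obtain ⟨x, hx, hdim⟩ := IsAssociatedPrime.exists_ne_zero_moduleDim_span_singleton_eq hp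
    exact hdim ▸ hpure _ (mt span_singleton_eq_bot.mp hx)
  · have : Nontrivial N := nontrivial_iff_ne_bot.mpr hN
    obtain ⟨p, hp⟩ := associatedPrimes.nonempty R N
    refine le_antisymm (moduleDim_le_of_injective N.injective_subtype) ?_
    rw [← hassoc p (hp.map_of_injective N.subtype N.injective_subtype)]
    exact hp.ringKrullDim_quotient_le_moduleDim

/-- Let `R` be a commutative Noetherian ring and `M` a nonzero finitely
generated `R`-module.  Then `M` is pure (every nonzero submodule of `M` has the same
dimension as `M`) if and only if every associated prime `p` of `M` satisfies
`dim R/p = dim M`. -/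
theorem pure_iff_associatedPrimes_dim_eq
    {R : Type*} [CommRing R] [IsNoetherianRing R]
    {M : Type*} [AddCommGroup M] [Module R M] [Module.Finite R M] [Nontrivial M] :
    (∀ N : Submodule R M, N ≠ ⊥ → moduleDim R N = moduleDim R M) ↔
      (∀ p ∈ associatedPrimes R M, ringKrullDim (R ⧸ p) = moduleDim R M) :=
  pure_iff_associatedPrimes_dim_eq_general
end

section
/- Let k be a commutative ring of prime characteristic p, let k[y_1,…,y_n] be a polynomial ring, and fix an index i with 1 ≤ i ≤ n. Let g ∈ k[y_1,…,y_n], and let b ∈ k[y_1,…,y_n] be a polynomial all of whose monomials have every exponent divisible by p, i.e. b = b'(y_1^p,…,y_n^p) for some polynomial b' (b lies in the image of the expansion-by-p map). If ∂g/∂y_i + b · y_i^{p-1} = 0, then b = 0, and consequently ∂g/∂y_i = 0. -/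
open MvPolynomial

/-! The coefficient of `∂g/∂yᵢ` at a monomial `m` is `(mᵢ + 1)` times a coefficient of `g`, so it
vanishes whenever `mᵢ ≡ -1 (mod p)`. At such monomials the coefficient of `b · yᵢ^{p-1}` is a
coefficient of `b` at an exponent divisible by `p` in the `i`-th variable, so these coefficients of
`b` vanish; all other coefficients of `b` vanish because `b` is an expansion by `p`. -/

namespace MvPolynomial

variable {R σ : Type*} [CommSemiring R]

theorem coeff_pderiv_eq_zero_of_dvd (p : ℕ) [CharP R p] {i : σ} (f : MvPolynomial σ R)
    {m : σ →₀ ℕ} (hm : p ∣ m i + 1) : coeff m (pderiv i f) = 0 := by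
  have hcast : ((m i : R) + 1) = 0 := by exact_mod_cast (CharP.cast_eq_zero_iff R p _).mpr hm
  rw [coeff_pderiv, hcast, mul_zero]

theorem expand_eq_zero_of_pderiv_add_expand_mul_X_pow_eq_zero {p : ℕ} [CharP R p] (hp : p ≠ 0)
    {i : σ} {g φ : MvPolynomial σ R}
    (h : pderiv i g + expand p φ * X i ^ (p - 1) = 0) : expand p φ = 0 := by
  ext m
  by_cases hdvd : p ∣ m i
  · have hcoeff := congrArg (coeff (m + Finsupp.single i (p - 1))) h
    have hm : p ∣ (m + Finsupp.single i (p - 1)) i + 1 := by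
      simpa [Nat.sub_add_cancel (Nat.one_le_iff_ne_zero.mpr hp), add_assoc] using hdvd
    rwa [coeff_add, coeff_pderiv_eq_zero_of_dvd p g hm, X_pow_eq_monomial, coeff_mul_monomial,
      mul_one, zero_add] at hcoeff
  · rw [coeff_expand_of_not_dvd φ hdvd, coeff_zero]

end MvPolynomial

/-- Let `k` be a commutative ring of prime characteristic `p`, and consider
the polynomial ring `k[y₁, …, yₙ]`.  Let `g` be a polynomial and let `b` be a polynomial all of
whose monomials have every exponent divisible by `p`, i.e. `b` is in the image of the
expansion-by-`p` map.  If `∂g/∂yᵢ + b·yᵢ^{p-1} = 0` then `b = 0` and hence `∂g/∂yᵢ = 0`. -/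
theorem pderiv_add_expand_mul_pow_eq_zero
    {k : Type*} [CommRing k] (p : ℕ) [Fact p.Prime] [CharP k p]
    {n : ℕ} (i : Fin n) (g b : MvPolynomial (Fin n) k)
    (hb : b ∈ Set.range (MvPolynomial.expand (R := k) (σ := Fin n) p))
    (h : pderiv i g + b * (X i) ^ (p - 1) = 0) :
    b = 0 ∧ pderiv i g = 0 := by
  obtain ⟨φ, rfl⟩ := hb
  have hb0 :=
    expand_eq_zero_of_pderiv_add_expand_mul_X_pow_eq_zero (Fact.out : p.Prime).ne_zero h
  rw [hb0, zero_mul, add_zero] at h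
  exact ⟨hb0, h⟩
end
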